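/- (Remark 3.1) The sets in the two geometric lemmas can be chosen compatibly: there exist finite disjoint sets Λ_Ξ, Λ_v ⊆ S² ∩ ℚ³, for each ξ ∈ Λ_Ξ ∪ Λ_v vectors ξ₁, ξ₂ ∈ ℝ³ with (ξ, ξ₁, ξ₂) an orthonormal basis of ℝ³ and such that distinct ξ ≠ ξ′ in Λ_Ξ ∪ Λ_v have ξ₁ ≠ ξ₁′, constants ε_Ξ, ε_v > 0 and smooth strictly positive functions γ_ξ realizing the decompositions A = Σ_{ξ∈Λ_Ξ} (γ_ξ(A))²(ξ ⊗ ξ₂ − ξ₂ ⊗ ξ) for all skew-symmetric A with |A| < ε_Ξ and A = Σ_{ξ∈Λ_v} (γ_ξ(A))²(ξ ⊗ ξ) for all symmetric A with |A − Id| < ε_v, and moreover a positive integer N_Λ such that N_Λ ξ, N_Λ ξ₁, N_Λ ξ₂ ∈ ℤ³ for every ξ ∈ Λ_Ξ ∪ Λ_v. -/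

import Mathlib

open scoped Matrix

/- Frobenius norm and normed-space structure on 3×3 real matrices. -/
attribute [local instance] Matrix.frobeniusNormedAddCommGroup Matrix.frobeniusNormedSpace

/-- Outer product of two vectors in ℝ³: `(u ⊗ w)ᵢⱼ = uᵢ wⱼ`. -/
def outer (u w : Fin 3 → ℝ) : Matrix (Fin 3) (Fin 3) ℝ := fun i j => u i * w j

/-- A vector in ℝ³ has rational coordinates. -/
def IsRationalVec (u : Fin 3 → ℝ) : Prop := ∀ i, ∃ q : ℚ, u i = (q : ℝ)

/-- Euclidean dot product on ℝ³. -/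
def dot3 (u v : Fin 3 → ℝ) : ℝ := ∑ i, u i * v i

/-- `(u, v, w)` is an orthonormal basis of ℝ³ (three pairwise-orthogonal unit vectors). -/
def OrthonormalTriple (u v w : Fin 3 → ℝ) : Prop :=
  dot3 u u = 1 ∧ dot3 v v = 1 ∧ dot3 w w = 1 ∧
  dot3 u v = 0 ∧ dot3 u w = 0 ∧ dot3 v w = 0

/-- A vector `u` becomes integral after multiplication by `N`. -/
def IsIntegralAfterScaling (N : ℕ) (u : Fin 3 → ℝ) : Prop :=
  ∀ i, ∃ z : ℤ, (N : ℝ) * u i = (z : ℝ)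

/-!
Take `Λ_Ξ = {±e_k}` with `ξ₂ = e_{k+1}`: the pair `±e_k` contributes
`±(e_k ⊗ e_{k+1} - e_{k+1} ⊗ e_k)`, so the weights `(1 ± A_{k,k+1}) / 2` reproduce a skew-symmetric
`A`. Take `Λ_v = {(3 e_k ± 4 e_{k+1}) / 5}`: in each pair the difference of the two weights
produces the off-diagonal entry `A_{k,k+1}` and their sum feeds the diagonal, which is recovered
by inverting a circulant system. The weights are affine in `A` and positive near `0`, resp. near
`Id`, so their square roots are smooth. All vectors involved are signed basis vectors or come from
the Pythagorean triple `(3, 4, 5)`, so they lie in `ℤ³ / 5`.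
-/

open Function Finset

theorem Matrix.norm_entry_le_frobenius_norm {m n α : Type*} [Fintype m] [Fintype n]
    [NormedAddCommGroup α] (A : Matrix m n α) (i : m) (j : n) : ‖A i j‖ ≤ ‖A‖ :=
  calc ‖A i j‖ ≤ ‖WithLp.toLp 2 (A i)‖ := PiLp.norm_apply_le (WithLp.toLp 2 (A i)) j
    _ ≤ ‖WithLp.toLp 2 fun i => WithLp.toLp 2 (A i)‖ :=
      PiLp.norm_apply_le (WithLp.toLp 2 fun i => WithLp.toLp 2 (A i)) i
    _ = ‖A‖ := rfl

theorem Matrix.contDiff_entry {m n 𝕜 : Type*} [Fintype m] [Fintype n] [NontriviallyNormedField 𝕜]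
    {r : WithTop ℕ∞} (i : m) (j : n) : ContDiff 𝕜 r fun A : Matrix m n 𝕜 => A i j :=
  IsBoundedLinearMap.contDiff ⟨(Matrix.entryLinearMap 𝕜 𝕜 i j).isLinear, 1, one_pos, fun A => by
    rw [one_mul]; exact Matrix.norm_entry_le_frobenius_norm A i j⟩

theorem IsIntegralAfterScaling.isRationalVec {N : ℕ} {u : Fin 3 → ℝ} (hN : N ≠ 0)
    (h : IsIntegralAfterScaling N u) : IsRationalVec u := fun i => by
  obtain ⟨z, hz⟩ := h i
  exact ⟨z / N, by push_cast; rw [← hz]; field_simp⟩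

theorem IsIntegralAfterScaling.add {N : ℕ} {u v : Fin 3 → ℝ} (hu : IsIntegralAfterScaling N u)
    (hv : IsIntegralAfterScaling N v) : IsIntegralAfterScaling N (u + v) := fun i => by
  obtain ⟨z, hz⟩ := hu i
  obtain ⟨w, hw⟩ := hv i
  exact ⟨z + w, by push_cast; rw [Pi.add_apply, mul_add, hz, hw]⟩

theorem isIntegralAfterScaling_single {N : ℕ} (k : Fin 3) {a : ℝ} (z : ℤ) (h : N * a = z) :
    IsIntegralAfterScaling N (Pi.single k a) := fun i => by
  rcases eq_or_ne i k with rfl | hik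
  · exact ⟨z, by simpa⟩
  · exact ⟨0, by simp [hik]⟩

theorem Fintype.sum_unitsInt {M : Type*} [AddCommMonoid M] (f : ℤˣ → M) :
    ∑ s, f s = f 1 + f (-1) := by
  simp

noncomputable section

def skewDir (k : Fin 3) (s : ℤˣ) : Fin 3 → ℝ := Pi.single k s

def skewDir₁ (k : Fin 3) (s : ℤˣ) : Fin 3 → ℝ := Pi.single (k + 2) s

def skewDir₂ (k : Fin 3) (_ : ℤˣ) : Fin 3 → ℝ := Pi.single (k + 1) 1

def skewWeight (k : Fin 3) (s : ℤˣ) (A : Matrix (Fin 3) (Fin 3) ℝ) : ℝ :=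
  (1 + (s : ℝ) * A k (k + 1)) / 2

def symDir (k : Fin 3) (s : ℤˣ) : Fin 3 → ℝ :=
  Pi.single k (3 / 5) + Pi.single (k + 1) (4 * (s : ℝ) / 5)

def symDir₁ (k : Fin 3) (s : ℤˣ) : Fin 3 → ℝ :=
  Pi.single k (-4 * (s : ℝ) / 5) + Pi.single (k + 1) (3 / 5)

def symDir₂ (k : Fin 3) (_ : ℤˣ) : Fin 3 → ℝ := Pi.single (k + 2) 1

/- The `s`-independent part `c_k` solves the circulant system `2 (9 c_k + 16 c_{k-1}) / 25 = A_kk`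
read off the diagonal of the pairs `outer (symDir k (±1)) (symDir k (±1))`; the factor `25 / 24`
is `1 / (2 · 12 / 25)`, matching their off-diagonal entry `± 12 / 25`. -/
def symWeight (k : Fin 3) (s : ℤˣ) (A : Matrix (Fin 3) (Fin 3) ℝ) : ℝ :=
  (81 * A k k + 256 * A (k + 1) (k + 1) - 144 * A (k + 2) (k + 2)) / 386
    + 25 / 24 * (s : ℝ) * A k (k + 1)

abbrev FrameIndex : Type := (Fin 3 × ℤˣ) ⊕ (Fin 3 × ℤˣ)

def dir : FrameIndex → Fin 3 → ℝ := Sum.elim (uncurry skewDir) (uncurry symDir)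

def dir₁ : FrameIndex → Fin 3 → ℝ := Sum.elim (uncurry skewDir₁) (uncurry symDir₁)

def dir₂ : FrameIndex → Fin 3 → ℝ := Sum.elim (uncurry skewDir₂) (uncurry symDir₂)

def weight : FrameIndex → Matrix (Fin 3) (Fin 3) ℝ → ℝ :=
  Sum.elim (uncurry skewWeight) (uncurry symWeight)

def skewDirs : Finset (Fin 3 → ℝ) := univ.image (uncurry skewDir)

def symDirs : Finset (Fin 3 → ℝ) := univ.image (uncurry symDir)

/- `extend` attaches frames and amplitudes to the directions `dir i`, with junk value `0` on every
other vector. -/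
def frame₁ : (Fin 3 → ℝ) → Fin 3 → ℝ := extend dir dir₁ 0

def frame₂ : (Fin 3 → ℝ) → Fin 3 → ℝ := extend dir dir₂ 0

def amplitude : (Fin 3 → ℝ) → Matrix (Fin 3) (Fin 3) ℝ → ℝ :=
  extend dir (fun i A => √(weight i A)) 0

end

theorem injective_dir : Injective dir := by
  rintro (⟨k, s⟩ | ⟨k, s⟩) (⟨k', s'⟩ | ⟨k', s'⟩) h <;>
    rcases Int.units_eq_one_or s with rfl | rfl <;>
    rcases Int.units_eq_one_or s' with rfl | rfl <;>
    fin_cases k <;> fin_cases k' <;>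
    simp [dir, skewDir, symDir, funext_iff, Fin.forall_fin_succ, Pi.single_apply] at h ⊢ <;>
    norm_num at h

theorem injective_dir₁ : Injective dir₁ := by
  rintro (⟨k, s⟩ | ⟨k, s⟩) (⟨k', s'⟩ | ⟨k', s'⟩) h <;>
    rcases Int.units_eq_one_or s with rfl | rfl <;>
    rcases Int.units_eq_one_or s' with rfl | rfl <;>
    fin_cases k <;> fin_cases k' <;>
    simp [dir₁, skewDir₁, symDir₁, funext_iff, Fin.forall_fin_succ, Pi.single_apply] at h ⊢ <;>
    norm_num at h

theorem frame₁_dir (i : FrameIndex) : frame₁ (dir i) = dir₁ i := injective_dir.extend_apply _ _ i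

theorem frame₂_dir (i : FrameIndex) : frame₂ (dir i) = dir₂ i := injective_dir.extend_apply _ _ i

theorem amplitude_dir (i : FrameIndex) : amplitude (dir i) = fun A => √(weight i A) :=
  injective_dir.extend_apply _ _ i

theorem exists_dir_eq_of_mem {ξ : Fin 3 → ℝ} (h : ξ ∈ skewDirs ∨ ξ ∈ symDirs) : ∃ i, dir i = ξ := by
  simp only [skewDirs, symDirs, mem_image, mem_univ, true_and] at h
  rcases h with ⟨p, rfl⟩ | ⟨p, rfl⟩
  exacts [⟨Sum.inl p, rfl⟩, ⟨Sum.inr p, rfl⟩]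

theorem skewDirs_disjoint_symDirs : Disjoint skewDirs symDirs := by
  simp only [skewDirs, symDirs, disjoint_left, mem_image, mem_univ, true_and, not_exists]
  rintro _ ⟨p, rfl⟩ q h
  exact Sum.inr_ne_inl (injective_dir h)

theorem orthonormalTriple_dir (i : FrameIndex) : OrthonormalTriple (dir i) (dir₁ i) (dir₂ i) := by
  rcases i with ⟨k, s⟩ | ⟨k, s⟩ <;> rcases Int.units_eq_one_or s with rfl | rfl <;> fin_cases k <;>
    simp [dir, dir₁, dir₂, skewDir, skewDir₁, skewDir₂, symDir, symDir₁, symDir₂, OrthonormalTriple,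
      dot3, Fin.sum_univ_three, Pi.single_apply] <;> norm_num

theorem isIntegralAfterScaling_dir (i : FrameIndex) :
    IsIntegralAfterScaling 5 (dir i) ∧ IsIntegralAfterScaling 5 (dir₁ i) ∧
      IsIntegralAfterScaling 5 (dir₂ i) := by
  rcases i with ⟨k, s⟩ | ⟨k, s⟩
  · exact ⟨isIntegralAfterScaling_single k (5 * s) (by push_cast; ring),
      isIntegralAfterScaling_single (k + 2) (5 * s) (by push_cast; ring),
      isIntegralAfterScaling_single (k + 1) 5 (by norm_num)⟩
  · exact ⟨(isIntegralAfterScaling_single k 3 (by norm_num)).add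
        (isIntegralAfterScaling_single (k + 1) (4 * s) (by push_cast; ring)),
      (isIntegralAfterScaling_single k (-4 * s) (by push_cast; ring)).add
        (isIntegralAfterScaling_single (k + 1) 3 (by norm_num)),
      isIntegralAfterScaling_single (k + 2) 5 (by norm_num)⟩

theorem skewWeight_pos {A : Matrix (Fin 3) (Fin 3) ℝ} (hA : ‖A‖ < 1 / 2) (k : Fin 3) (s : ℤˣ) :
    0 < skewWeight k s A := by
  have hk := (abs_lt.1 ((A.norm_entry_le_frobenius_norm k (k + 1)).trans_lt hA))
  rcases Int.units_eq_one_or s with rfl | rfl <;> simp [skewWeight] <;> linarith [hk.1, hk.2]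

theorem symWeight_pos {A : Matrix (Fin 3) (Fin 3) ℝ} (hA : ‖A - 1‖ < 1 / 5) (k : Fin 3) (s : ℤˣ) :
    0 < symWeight k s A := by
  have entry (i j : Fin 3) : |(A - 1) i j| < 1 / 5 :=
    ((A - 1).norm_entry_le_frobenius_norm i j).trans_lt hA
  have h₀ := abs_lt.1 (entry k k)
  have h₁ := abs_lt.1 (entry (k + 1) (k + 1))
  have h₂ := abs_lt.1 (entry (k + 2) (k + 2))
  have h₃ := abs_lt.1 (entry k (k + 1))
  have hk : k ≠ k + 1 := by fin_cases k <;> decide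
  simp only [Matrix.sub_apply, Matrix.one_apply_eq, Matrix.one_apply_ne hk, sub_zero] at h₀ h₁ h₂ h₃
  rcases Int.units_eq_one_or s with rfl | rfl <;> simp [symWeight] <;> linarith

theorem sum_skewWeight_smul {A : Matrix (Fin 3) (Fin 3) ℝ} (hA : Aᵀ = -A) :
    ∑ k, ∑ s, skewWeight k s A •
      (outer (skewDir k s) (skewDir₂ k s) - outer (skewDir₂ k s) (skewDir k s)) = A := by
  have h i j : A j i = -A i j := by simpa using congrFun (congrFun hA i) j
  ext i j
  simp only [Fin.sum_univ_three, Fintype.sum_unitsInt, Matrix.add_apply, Matrix.smul_apply,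
    Matrix.sub_apply, outer, skewDir, skewDir₂, skewWeight]
  fin_cases i <;> fin_cases j <;> simp <;> linarith [h 0 0, h 1 1, h 2 2, h 0 1, h 0 2, h 1 2]

theorem sum_symWeight_smul {A : Matrix (Fin 3) (Fin 3) ℝ} (hA : Aᵀ = A) :
    ∑ k, ∑ s, symWeight k s A • outer (symDir k s) (symDir k s) = A := by
  have h i j : A j i = A i j := by simpa using congrFun (congrFun hA i) j
  ext i j
  simp only [Fin.sum_univ_three, Fintype.sum_unitsInt, Matrix.add_apply, Matrix.smul_apply, outer,
    symDir, symWeight]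
  fin_cases i <;> fin_cases j <;> simp <;> linarith [h 0 1, h 0 2, h 1 2]

theorem contDiff_weight {r : WithTop ℕ∞} (i : FrameIndex) : ContDiff ℝ r (weight i) := by
  have entry := Matrix.contDiff_entry (𝕜 := ℝ) (m := Fin 3) (n := Fin 3) (r := r)
  rcases i with ⟨k, s⟩ | ⟨k, s⟩
  · exact (contDiff_const.add (contDiff_const.mul (entry _ _))).div_const 2
  · exact ((((contDiff_const.mul (entry _ _)).add (contDiff_const.mul (entry _ _))).sub
      (contDiff_const.mul (entry _ _))).div_const 386).add (contDiff_const.mul (entry _ _))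

theorem contDiffOn_amplitude_dir_and_pos {r : WithTop ℕ∞} (i : FrameIndex)
    {S : Set (Matrix (Fin 3) (Fin 3) ℝ)} (hS : ∀ A ∈ S, 0 < weight i A) :
    ContDiffOn ℝ r (amplitude (dir i)) S ∧ ∀ A ∈ S, 0 < amplitude (dir i) A := by
  rw [amplitude_dir]
  exact ⟨(contDiff_weight i).contDiffOn.sqrt fun A hA => (hS A hA).ne',
    fun A hA => Real.sqrt_pos.2 (hS A hA)⟩

theorem amplitude_skewDirs :
    ∀ ξ ∈ skewDirs, ContDiffOn ℝ (⊤ : ℕ∞) (amplitude ξ) {A | Aᵀ = -A ∧ ‖A‖ < 1 / 2} ∧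
      ∀ A : Matrix (Fin 3) (Fin 3) ℝ, Aᵀ = -A → ‖A‖ < 1 / 2 → 0 < amplitude ξ A := by
  simp only [skewDirs, mem_image, mem_univ, true_and]
  rintro _ ⟨⟨k, s⟩, rfl⟩
  obtain ⟨hsmooth, hpos⟩ := contDiffOn_amplitude_dir_and_pos (.inl (k, s))
    (S := {A | Aᵀ = -A ∧ ‖A‖ < 1 / 2}) fun A hA => skewWeight_pos hA.2 k s
  exact ⟨hsmooth, fun A hA hA' => hpos A ⟨hA, hA'⟩⟩

theorem amplitude_symDirs :
    ∀ ξ ∈ symDirs, ContDiffOn ℝ (⊤ : ℕ∞) (amplitude ξ) {A | Aᵀ = A ∧ ‖A - 1‖ < 1 / 5} ∧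
      ∀ A : Matrix (Fin 3) (Fin 3) ℝ, Aᵀ = A → ‖A - 1‖ < 1 / 5 → 0 < amplitude ξ A := by
  simp only [symDirs, mem_image, mem_univ, true_and]
  rintro _ ⟨⟨k, s⟩, rfl⟩
  obtain ⟨hsmooth, hpos⟩ := contDiffOn_amplitude_dir_and_pos (.inr (k, s))
    (S := {A | Aᵀ = A ∧ ‖A - 1‖ < 1 / 5}) fun A hA => symWeight_pos hA.2 k s
  exact ⟨hsmooth, fun A hA hA' => hpos A ⟨hA, hA'⟩⟩

theorem skew_decomposition {A : Matrix (Fin 3) (Fin 3) ℝ} (hA : Aᵀ = -A) (hA' : ‖A‖ < 1 / 2) :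
    A = ∑ ξ ∈ skewDirs, amplitude ξ A ^ 2 • (outer ξ (frame₂ ξ) - outer (frame₂ ξ) ξ) := by
  have hamp k s : amplitude (skewDir k s) A ^ 2 = skewWeight k s A := by
    rw [show skewDir k s = dir (.inl (k, s)) from rfl, amplitude_dir]
    exact Real.sq_sqrt (skewWeight_pos hA' k s).le
  have hframe k s : frame₂ (skewDir k s) = skewDir₂ k s := frame₂_dir (.inl (k, s))
  have hinj : Injective (uncurry skewDir) := injective_dir.comp Sum.inl_injective
  rw [skewDirs, sum_image hinj.injOn, Fintype.sum_prod_type]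
  simp only [uncurry_apply_pair, hamp, hframe]
  exact (sum_skewWeight_smul hA).symm

theorem sym_decomposition {A : Matrix (Fin 3) (Fin 3) ℝ} (hA : Aᵀ = A) (hA' : ‖A - 1‖ < 1 / 5) :
    A = ∑ ξ ∈ symDirs, amplitude ξ A ^ 2 • outer ξ ξ := by
  have hamp k s : amplitude (symDir k s) A ^ 2 = symWeight k s A := by
    rw [show symDir k s = dir (.inr (k, s)) from rfl, amplitude_dir]
    exact Real.sq_sqrt (symWeight_pos hA' k s).le
  have hinj : Injective (uncurry symDir) := injective_dir.comp Sum.inr_injective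
  rw [symDirs, sum_image hinj.injOn, Fintype.sum_prod_type]
  simp only [uncurry_apply_pair, hamp]
  exact (sum_symWeight_smul hA).symm

/-- **Remark 3.1.** The two geometric lemmas can be realized compatibly: there are finite
disjoint sets `Λ_Ξ, Λ_v ⊆ S² ∩ ℚ³`, orthonormal bases `(ξ, ξ₁, ξ₂)` with the `ξ₁`'s pairwise
distinct across `Λ_Ξ ∪ Λ_v`, radii `ε_Ξ, ε_v > 0` with smooth positive amplitude functions
realizing the skew-symmetric and symmetric decompositions, and a positive integer `N_Λ` such
that `N_Λ ξ, N_Λ ξ₁, N_Λ ξ₂ ∈ ℤ³` for every `ξ ∈ Λ_Ξ ∪ Λ_v`. -/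
theorem geometric_lemmas_compatible :
    ∃ (ΛΞ Λv : Finset (Fin 3 → ℝ)) (e₁ e₂ : (Fin 3 → ℝ) → (Fin 3 → ℝ)) (εΞ εv : ℝ)
      (γ : (Fin 3 → ℝ) → Matrix (Fin 3) (Fin 3) ℝ → ℝ) (NΛ : ℕ),
      Disjoint ΛΞ Λv ∧ 0 < εΞ ∧ 0 < εv ∧ 0 < NΛ ∧
      (∀ ξ, ξ ∈ ΛΞ ∨ ξ ∈ Λv → IsRationalVec ξ ∧ OrthonormalTriple ξ (e₁ ξ) (e₂ ξ)) ∧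
      (∀ ξ, ξ ∈ ΛΞ ∨ ξ ∈ Λv → ∀ ξ', ξ' ∈ ΛΞ ∨ ξ' ∈ Λv → ξ ≠ ξ' → e₁ ξ ≠ e₁ ξ') ∧
      (∀ ξ ∈ ΛΞ,
        ContDiffOn ℝ (⊤ : ℕ∞) (γ ξ)
          {A : Matrix (Fin 3) (Fin 3) ℝ | Aᵀ = -A ∧ ‖A‖ < εΞ} ∧
        ∀ A : Matrix (Fin 3) (Fin 3) ℝ, Aᵀ = -A → ‖A‖ < εΞ → 0 < γ ξ A) ∧
      (∀ ξ ∈ Λv,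
        ContDiffOn ℝ (⊤ : ℕ∞) (γ ξ)
          {A : Matrix (Fin 3) (Fin 3) ℝ | Aᵀ = A ∧ ‖A - 1‖ < εv} ∧
        ∀ A : Matrix (Fin 3) (Fin 3) ℝ, Aᵀ = A → ‖A - 1‖ < εv → 0 < γ ξ A) ∧
      (∀ A : Matrix (Fin 3) (Fin 3) ℝ, Aᵀ = -A → ‖A‖ < εΞ →
        A = ∑ ξ ∈ ΛΞ, (γ ξ A) ^ 2 • (outer ξ (e₂ ξ) - outer (e₂ ξ) ξ)) ∧
      (∀ A : Matrix (Fin 3) (Fin 3) ℝ, Aᵀ = A → ‖A - 1‖ < εv →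
        A = ∑ ξ ∈ Λv, (γ ξ A) ^ 2 • outer ξ ξ) ∧
      (∀ ξ, ξ ∈ ΛΞ ∨ ξ ∈ Λv →
        IsIntegralAfterScaling NΛ ξ ∧ IsIntegralAfterScaling NΛ (e₁ ξ) ∧
          IsIntegralAfterScaling NΛ (e₂ ξ)) := by
  refine ⟨skewDirs, symDirs, frame₁, frame₂, 1 / 2, 1 / 5, amplitude, 5,
    skewDirs_disjoint_symDirs, by norm_num, by norm_num, by norm_num, ?_, ?_,
    amplitude_skewDirs, amplitude_symDirs, fun A hA hA' => skew_decomposition hA hA',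
    fun A hA hA' => sym_decomposition hA hA', ?_⟩
  · intro ξ hξ
    obtain ⟨i, rfl⟩ := exists_dir_eq_of_mem hξ
    rw [frame₁_dir, frame₂_dir]
    exact ⟨(isIntegralAfterScaling_dir i).1.isRationalVec (by norm_num), orthonormalTriple_dir i⟩
  · intro ξ hξ ξ' hξ' hne
    obtain ⟨i, rfl⟩ := exists_dir_eq_of_mem hξ
    obtain ⟨j, rfl⟩ := exists_dir_eq_of_mem hξ'
    rw [frame₁_dir, frame₁_dir]
    exact injective_dir₁.ne (ne_of_apply_ne dir hne)
  · intro ξ hξ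
    obtain ⟨i, rfl⟩ := exists_dir_eq_of_mem hξ
    rw [frame₁_dir, frame₂_dir]
    exact isIntegralAfterScaling_dir i
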